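/- Every board of isolated stacks of heights one and two in which every group has exactly four tiles is solvable: there exists a sequence of legal moves removing all tiles. -/

import Mathlib

/-!
Induction on the number of tiles, with the invariant: every group has 0, 2 or 4 tiles left and
there is no blocked cycle (a blocked cycle needs two-tile groups, so a board with four tiles per
group has none).

A blocked cycle amounts to a nonempty set `S` of two-tile groups each of which is buried under a
tile of a group of `S` (`IsStuck`). If no two stacks had equal tops then, stacks having height at
most two, the multiset of top tiles would be contained in, hence equal to, the multiset of buried
tiles, and the top groups would form such a set. So there are stacks `s₁`, `s₂` with the same top
`g`. If playing them creates a blocked cycle, that cycle passes through `g`: it climbs from the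
stack `[f g, g]` in which `g` is buried to some stack `[g, c]`. Playing `s₁` with `[g, c]` instead
is safe: a cycle it created would climb from the same stack `[f g, g]` along the same stacks, since
a two-tile group is buried under only one tile, so it would end at a second stack `[g, c]`, and `c`
would have three tiles.
-/

/-- A board is a finite multiset of isolated stacks; each stack is a list of
tile groups, with the head of the list being the top tile of the stack. -/
abbrev Board (G : Type*) := Multiset (List G)

variable {G : Type*} [DecidableEq G]

/-- The number of tiles of group `g` remaining on the board. -/
def tileCount (B : Board G) (g : G) : ℕ := (B.map (fun s => s.count g)).sum

/-- The total number of tiles on the board. -/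
def totalTiles (B : Board G) : ℕ := (B.map List.length).sum

/-- The board obtained by removing the (playable) top tiles of stacks `s₁` and
`s₂`, the remaining stacks being `rest`; emptied stacks disappear. -/
def play (s₁ s₂ : List G) (rest : Board G) : Board G :=
  Multiset.filter (fun s => s ≠ []) (s₁.tail ::ₘ s₂.tail ::ₘ rest)

/-- A legal move: remove two playable (top) tiles of the same group. -/
def Move (B B' : Board G) : Prop :=
  ∃ (g : G) (s₁ s₂ : List G) (rest : Board G),
    B = s₁ ::ₘ s₂ ::ₘ rest ∧ s₁.head? = some g ∧ s₂.head? = some g ∧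
    B' = play s₁ s₂ rest

/-- A board is solvable iff some sequence of legal moves empties it. -/
def Solvable (B : Board G) : Prop := Relation.ReflTransGen Move B 0

/-- All stacks are nonempty and of height at most two. -/
def HeightsOK (B : Board G) : Prop := ∀ s ∈ B, s ≠ [] ∧ s.length ≤ 2

/-- A blocked cycle: distinct groups `p 0, …, p k`, each with exactly two
remaining tiles, such that for each `i` there is a height-two stack with a
`p (i+1)`-tile (cyclically) on top of a `p i`-tile. -/
def BlockedCycle (B : Board G) {k : ℕ} (p : Fin (k + 1) → G) : Prop :=
  Function.Injective p ∧ (∀ i, tileCount B (p i) = 2) ∧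
    ∀ i, [p (i + 1), p i] ∈ B

/-- The board contains some blocked cycle. -/
def HasBlockedCycle (B : Board G) : Prop :=
  ∃ (k : ℕ) (p : Fin (k + 1) → G), BlockedCycle B p

lemma eq_of_eqOn_inter {α : Type*} [DecidableEq α] {S T : Finset α} {f f' : α → α}
    (hf : Set.MapsTo f S S) (hf' : Set.MapsTo f' T T) (hinj : Set.InjOn f S)
    (hinj' : Set.InjOn f' T) (heq : Set.EqOn f f' ↑(S ∩ T)) {x y : α} (hx : x ∈ S) (hy : y ∈ T)
    (hxy : f x = f' y) (h : f x ∈ S ∩ T) : x = y := by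
  have hmaps : Set.MapsTo f ↑(S ∩ T) ↑(S ∩ T) := fun a ha => by
    have ha' := Finset.mem_inter.mp ha
    exact Finset.mem_inter.mpr ⟨hf ha'.1, (heq ha).symm ▸ hf' ha'.2⟩
  obtain ⟨z, hz, hzx⟩ := Finset.surjOn_of_injOn_of_card_le f hmaps
    (hinj.mono (by simp)) le_rfl h
  have hz' := Finset.mem_inter.mp hz
  obtain rfl : z = x := hinj hz'.1 hx hzx
  exact hinj' hz'.2 hy ((heq hz).symm.trans hxy)

section Tiles

variable {B M : Board G} {s t s₁ s₂ : List G} {rest : Board G} {g a : G}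

@[simp]
lemma tileCount_cons : tileCount (s ::ₘ B) g = s.count g + tileCount B g := by
  simp [tileCount]

lemma count_le_tileCount (hs : s ∈ B) : s.count g ≤ tileCount B g := by
  obtain ⟨B', rfl⟩ := Multiset.exists_cons_of_mem hs
  simp

lemma eq_of_mem_of_tileCount_le_one (h : tileCount M a ≤ 1) (hs : s ∈ M) (ht : t ∈ M)
    (has : a ∈ s) (hat : a ∈ t) : s = t := by
  obtain ⟨M', rfl⟩ := Multiset.exists_cons_of_mem hs
  rcases Multiset.mem_cons.mp ht with rfl | ht
  · rfl
  have := count_le_tileCount (g := a) ht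
  have := List.count_pos_iff.mpr has
  have := List.count_pos_iff.mpr hat
  rw [tileCount_cons] at h
  omega

lemma eq_of_mem_of_tileCount_le_two {x y e : G} (h : tileCount M a ≤ 2) (he : [a, e] ∈ M)
    (hx : [x, a] ∈ M) (hy : [y, a] ∈ M) : x = y := by
  obtain ⟨M', rfl⟩ := Multiset.exists_cons_of_mem he
  rw [tileCount_cons] at h
  have hM' {z : G} (hz : [z, a] ∈ M') : 1 ≤ tileCount M' a :=
    (List.count_pos_iff.mpr (by simp)).trans_le (count_le_tileCount hz)
  have hae : 1 ≤ [a, e].count a := List.count_pos_iff.mpr (by simp)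
  have haa : [a, a].count a = 2 := by simp
  rcases Multiset.mem_cons.mp hx with hx' | hx' <;> rcases Multiset.mem_cons.mp hy with hy' | hy'
  · simp only [List.cons.injEq] at hx' hy'
    exact hx'.1.trans hy'.1.symm
  · simp only [List.cons.injEq, and_true] at hx'
    obtain ⟨rfl, rfl⟩ := hx'
    have := hM' hy'
    omega
  · simp only [List.cons.injEq, and_true] at hy'
    obtain ⟨rfl, rfl⟩ := hy'
    have := hM' hx'
    omega
  · simpa using eq_of_mem_of_tileCount_le_one (a := a) (by omega) hx' hy' (by simp) (by simp)

lemma tileCount_filter_ne_nil (M : Board G) (g : G) :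
    tileCount (M.filter (· ≠ [])) g = tileCount M g := by
  induction M using Multiset.induction_on with
  | empty => rfl
  | cons s M ih => by_cases hs : s = [] <;> simp [hs, ih]

omit [DecidableEq G] in
lemma totalTiles_filter_ne_nil (M : Board G) :
    totalTiles (M.filter (· ≠ [])) = totalTiles M := by
  induction M using Multiset.induction_on with
  | empty => rfl
  | cons s M ih => by_cases hs : s = [] <;> simp_all [totalTiles]

lemma tileCount_play (h₁ : s₁.head? = some g) (h₂ : s₂.head? = some g) (a : G) :
    tileCount (play s₁ s₂ rest) a + (if a = g then 2 else 0) =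
      tileCount (s₁ ::ₘ s₂ ::ₘ rest) a := by
  obtain ⟨t₁, rfl⟩ := List.head?_eq_some_iff.mp h₁
  obtain ⟨t₂, rfl⟩ := List.head?_eq_some_iff.mp h₂
  simp only [play, tileCount_filter_ne_nil, tileCount_cons, List.tail_cons, List.count_cons,
    beq_iff_eq]
  rcases eq_or_ne a g with rfl | hag
  · simp only [↓reduceIte]
    omega
  · simp [hag, hag.symm]

omit [DecidableEq G] in
lemma totalTiles_play (h₁ : s₁ ≠ []) (h₂ : s₂ ≠ []) :
    totalTiles (play s₁ s₂ rest) + 2 = totalTiles (s₁ ::ₘ s₂ ::ₘ rest) := by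
  obtain ⟨g₁, t₁, rfl⟩ := List.exists_cons_of_ne_nil h₁
  obtain ⟨g₂, t₂, rfl⟩ := List.exists_cons_of_ne_nil h₂
  rw [play, totalTiles_filter_ne_nil]
  simp only [totalTiles, List.tail_cons, Multiset.map_cons, Multiset.sum_cons, List.length_cons]
  omega

lemma mem_of_mem_play {x y : G} (h₁ : s₁.length ≤ 2) (h₂ : s₂.length ≤ 2)
    (h : [x, y] ∈ play s₁ s₂ rest) : [x, y] ∈ rest := by
  rcases Multiset.mem_cons.mp (Multiset.mem_of_mem_filter h) with h | h
  · have := congrArg List.length h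
    simp only [List.length_cons, List.length_nil, List.length_tail] at this
    omega
  rcases Multiset.mem_cons.mp h with h | h
  · have := congrArg List.length h
    simp only [List.length_cons, List.length_nil, List.length_tail] at this
    omega
  exact h

omit [DecidableEq G] in
lemma heightsOK_play (h : HeightsOK (s₁ ::ₘ s₂ ::ₘ rest)) : HeightsOK (play s₁ s₂ rest) := by
  intro s hs
  refine ⟨(Multiset.mem_filter.mp hs).2, ?_⟩
  rcases Multiset.mem_cons.mp (Multiset.mem_of_mem_filter hs) with rfl | hs
  · have := (h s₁ (by simp)).2
    rw [List.length_tail]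
    omega
  rcases Multiset.mem_cons.mp hs with rfl | hs
  · have := (h s₂ (by simp)).2
    rw [List.length_tail]
    omega
  exact (h s (by simp [hs])).2

end Tiles

def IsStuck (M : Board G) (S : Finset G) (f : G → G) : Prop :=
  ∀ a ∈ S, f a ∈ S ∧ tileCount M a = 2 ∧ [f a, a] ∈ M

open Function in
lemma hasBlockedCycle_of_isStuck {M : Board G} {S : Finset G} {f : G → G}
    (hS : S.Nonempty) (hM : IsStuck M S f) : HasBlockedCycle M := by
  obtain ⟨x₀, hx₀⟩ := hS
  have horbit : ∀ n, ∀ a ∈ S, f^[n] a ∈ S := fun n =>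
    Nat.rec (fun _ ha => ha) (fun n ih a ha => ih (f a) (hM a ha).1) n
  obtain ⟨m, n, hmn, hperiod⟩ := Finite.exists_ne_map_eq_of_infinite
    fun n : ℕ => (⟨f^[n] x₀, horbit n x₀ hx₀⟩ : S)
  -- `x := f^[m] x₀` is periodic, and its orbit is the blocked cycle
  wlog hlt : m < n generalizing m n
  · exact this n m hmn.symm hperiod.symm (by omega)
  set x := f^[m] x₀
  have hx : IsPeriodicPt f (n - m) x := by
    simp only [Subtype.mk.injEq] at hperiod
    rw [IsPeriodicPt, IsFixedPt, ← iterate_add_apply, Nat.sub_add_cancel hlt.le, ← hperiod]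
  obtain ⟨k, hk⟩ := Nat.exists_eq_add_one.mpr (hx.minimalPeriod_pos (by omega))
  have hstep (i : Fin (k + 1)) : f^[((i + 1 : Fin (k + 1)) : ℕ)] x = f (f^[(i : ℕ)] x) := by
    have h := iterate_mod_minimalPeriod_eq (f := f) (x := x) (n := (i : ℕ) + 1)
    rw [hk] at h
    rw [← iterate_succ_apply' f, ← h, Fin.val_add, Fin.val_one', Nat.add_mod_mod]
  refine ⟨k, fun i => f^[(i : ℕ)] x, fun i j hij => ?_, fun i => ?_, fun i => ?_⟩
  · exact Fin.ext <|
      iterate_injOn_Iio_minimalPeriod (by simp [hk, i.is_lt]) (by simp [hk, j.is_lt]) hij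
  · exact (hM _ (horbit _ _ (horbit m x₀ hx₀))).2.1
  · simpa only [hstep] using (hM _ (horbit _ _ (horbit m x₀ hx₀))).2.2

lemma HasBlockedCycle.exists_isStuck {M : Board G} (h : HasBlockedCycle M) :
    ∃ (S : Finset G) (f : G → G),
      S.Nonempty ∧ IsStuck M S f ∧ Set.InjOn f S ∧ Set.SurjOn f S S := by
  obtain ⟨k, p, hinj, hcount, hmem⟩ := h
  refine ⟨Finset.univ.image p, fun a => p (Function.invFun p a + 1), by simp, ?_, ?_, ?_⟩
  · intro a ha
    obtain ⟨i, -, rfl⟩ := Finset.mem_image.mp ha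
    simp only [Function.leftInverse_invFun hinj i]
    exact ⟨Finset.mem_image_of_mem _ (Finset.mem_univ _), hcount i, hmem i⟩
  all_goals simp only [Finset.coe_image, Finset.coe_univ, Set.image_univ]
  · rintro _ ⟨i, rfl⟩ _ ⟨j, rfl⟩ hij
    simpa [Function.leftInverse_invFun hinj _, hinj.eq_iff] using hij
  · rintro _ ⟨i, rfl⟩
    exact ⟨p (i - 1), ⟨i - 1, rfl⟩, by simp [Function.leftInverse_invFun hinj _]⟩

section TopsBottoms

variable {B : Board G} {g a : G}

def tops (B : Board G) : Multiset G := B.bind fun s => ↑(s.take 1)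

def bottoms (B : Board G) : Multiset G := B.bind fun s => ↑(s.drop 1)

lemma tileCount_eq_count_tops_add_count_bottoms (g : G) :
    tileCount B g = (tops B).count g + (bottoms B).count g := by
  simp only [tileCount, tops, bottoms, Multiset.count_bind, ← Multiset.sum_map_add,
    Multiset.coe_count, ← List.count_append, List.take_append_drop]

omit [DecidableEq G] in
lemma card_tops (hH : HeightsOK B) : Multiset.card (tops B) = Multiset.card B := by
  rw [tops, Multiset.card_bind, Multiset.map_congr rfl fun s hs => ?_, Multiset.map_const',
    Multiset.sum_replicate, smul_eq_mul, mul_one]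
  have := List.length_pos_iff.mpr (hH s hs).1
  simp only [Function.comp_apply, Multiset.coe_card, List.length_take]
  omega

omit [DecidableEq G] in
lemma card_bottoms_le (hH : HeightsOK B) : Multiset.card (bottoms B) ≤ Multiset.card B := by
  rw [bottoms, Multiset.card_bind]
  refine (Multiset.sum_map_le_sum_map _ (fun _ => 1) fun s hs => ?_).trans (by simp)
  simpa using (hH s hs).2

omit [DecidableEq G] in
lemma exists_cons_mem_of_mem_bottoms (hH : HeightsOK B) (ha : a ∈ bottoms B) : ∃ x, [x, a] ∈ B := by
  obtain ⟨s, hs, has⟩ := Multiset.mem_bind.mp ha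
  match s, (hH s hs).2, has with
  | [x, y], _, has =>
    obtain rfl : a = y := by simpa using has
    exact ⟨x, hs⟩

omit [DecidableEq G] in
lemma mem_tops_of_cons_mem {x : G} {t : List G} (h : x :: t ∈ B) : x ∈ tops B :=
  Multiset.mem_bind.mpr ⟨_, h, by simp⟩

omit [DecidableEq G] in
lemma exists_cons_mem_of_mem_tops (ha : a ∈ tops B) : ∃ t, a :: t ∈ B := by
  obtain ⟨s, hs, has⟩ := Multiset.mem_bind.mp ha
  match s, has with
  | x :: t, has =>
    obtain rfl : a = x := by simpa using has
    exact ⟨t, hs⟩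

lemma exists_eq_cons_cons_of_two_le_count_tops (h : 2 ≤ (tops B).count g) :
    ∃ (s₁ s₂ : List G) (rest : Board G),
      B = s₁ ::ₘ s₂ ::ₘ rest ∧ s₁.head? = some g ∧ s₂.head? = some g := by
  induction B using Multiset.induction_on with
  | empty => simp [tops] at h
  | cons s B ih =>
    have hs : (s.take 1).count g = if s.head? = some g then 1 else 0 := by
      rcases s with _ | ⟨x, t⟩ <;> simp [List.count_singleton]
    rw [tops, Multiset.cons_bind, Multiset.count_add, ← tops, Multiset.coe_count, hs] at h
    split_ifs at h with hg
    · have hgB : g ∈ tops B := Multiset.count_pos.mp (by omega)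
      obtain ⟨t, ht⟩ := exists_cons_mem_of_mem_tops hgB
      obtain ⟨rest, rfl⟩ := Multiset.exists_cons_of_mem ht
      exact ⟨s, g :: t, rest, rfl, hg, rfl⟩
    · obtain ⟨s₁, s₂, rest, rfl, h₁, h₂⟩ := ih (by omega)
      exact ⟨s₁, s₂, s ::ₘ rest, by simp only [Multiset.cons_swap], h₁, h₂⟩

end TopsBottoms

lemma exists_eq_cons_cons_of_not_hasBlockedCycle {B : Board G} (hB : B ≠ 0) (hH : HeightsOK B)
    (h024 : ∀ g, tileCount B g = 0 ∨ tileCount B g = 2 ∨ tileCount B g = 4)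
    (hnc : ¬ HasBlockedCycle B) :
    ∃ (g : G) (s₁ s₂ : List G) (rest : Board G),
      B = s₁ ::ₘ s₂ ::ₘ rest ∧ s₁.head? = some g ∧ s₂.head? = some g := by
  by_contra hno
  have htops (g : G) : (tops B).count g ≤ 1 := by
    by_contra h
    exact hno ⟨g, exists_eq_cons_cons_of_two_le_count_tops (by omega)⟩
  have hcount := tileCount_eq_count_tops_add_count_bottoms (B := B)
  have hle : tops B ≤ bottoms B := Multiset.le_iff_count.mpr fun g => by
    have := h024 g; have := hcount g; have := htops g; omega
  have heq : tops B = bottoms B :=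
    Multiset.eq_of_le_of_card_le hle ((card_bottoms_le hH).trans (card_tops hH).ge)
  have hbelow : ∀ a ∈ tops B, ∃ x, [x, a] ∈ B := fun a ha =>
    exists_cons_mem_of_mem_bottoms hH (heq ▸ ha)
  choose! f hf using hbelow
  refine hnc (hasBlockedCycle_of_isStuck (S := (tops B).toFinset) (f := f) ?_ fun a ha => ?_)
  · rw [Multiset.toFinset_nonempty, ← Multiset.card_pos, card_tops hH, Multiset.card_pos]
    exact hB
  · rw [Multiset.mem_toFinset] at ha ⊢
    refine ⟨mem_tops_of_cons_mem (hf a ha), ?_, hf a ha⟩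
    rw [hcount, ← heq]
    have := Multiset.count_pos.mpr ha
    have := htops a
    omega

section SafeMove

variable {s₁ s₂ : List G} {rest R B : Board G} {g c : G} {S : Finset G} {f : G → G}

lemma IsStuck.tileCount_of_play (h₁ : s₁.head? = some g) (h₂ : s₂.head? = some g)
    (hS : IsStuck (play s₁ s₂ rest) S f) {a : G} (ha : a ∈ S) (hag : a ≠ g) :
    tileCount (s₁ ::ₘ s₂ ::ₘ rest) a = 2 := by
  rw [← tileCount_play h₁ h₂, if_neg hag, (hS a ha).2.1]

lemma IsStuck.mem_of_play (l₁ : s₁.length ≤ 2) (l₂ : s₂.length ≤ 2)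
    (hS : IsStuck (play s₁ s₂ rest) S f) {a : G} (ha : a ∈ S) : [f a, a] ∈ rest :=
  mem_of_mem_play l₁ l₂ (hS a ha).2.2

lemma IsStuck.head_mem_of_play (hnc : ¬ HasBlockedCycle (s₁ ::ₘ s₂ ::ₘ rest))
    (h₁ : s₁.head? = some g) (h₂ : s₂.head? = some g) (l₁ : s₁.length ≤ 2) (l₂ : s₂.length ≤ 2)
    (hne : S.Nonempty) (hS : IsStuck (play s₁ s₂ rest) S f) : g ∈ S := by
  by_contra hg
  refine hnc (hasBlockedCycle_of_isStuck (f := f) hne fun a ha => ⟨(hS a ha).1, ?_, ?_⟩)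
  · exact hS.tileCount_of_play h₁ h₂ ha (ne_of_mem_of_not_mem ha hg)
  · exact Multiset.mem_cons_of_mem (Multiset.mem_cons_of_mem (hS.mem_of_play l₁ l₂ ha))

lemma IsStuck.eq_of_mem {M₁ M₂ : Board G} {S₁ S₂ : Finset G} {f₁ f₂ : G → G} {a : G}
    (hS₁ : IsStuck M₁ S₁ f₁) (hS₂ : IsStuck M₂ S₂ f₂) (hsurj₁ : Set.SurjOn f₁ S₁ S₁)
    (hM₁ : ∀ x y, [x, y] ∈ M₁ → [x, y] ∈ B) (hM₂ : ∀ x y, [x, y] ∈ M₂ → [x, y] ∈ B)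
    (ha : tileCount B a ≤ 2) (ha₁ : a ∈ S₁) (ha₂ : a ∈ S₂) : f₁ a = f₂ a := by
  obtain ⟨e, he, hfe⟩ := hsurj₁ ha₁
  exact eq_of_mem_of_tileCount_le_two ha (hM₁ _ _ (hfe ▸ (hS₁ e he).2.2))
    (hM₁ _ _ (hS₁ a ha₁).2.2) (hM₂ _ _ (hS₂ a ha₂).2.2)

lemma IsStuck.not_mem_of_play_pair (hg : tileCount (s₁ ::ₘ s₂ ::ₘ [g, g] ::ₘ R) g ≤ 4)
    (h₁ : s₁.head? = some g) (h₂ : s₂.head? = some g) (l₁ : s₁.length ≤ 2)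
    (hS : IsStuck (play [g, g] s₁ (s₂ ::ₘ R)) S f) : g ∉ S := by
  intro hgS
  have hg₁ : 1 ≤ s₁.count g := List.count_pos_iff.mpr (List.mem_of_mem_head? h₁)
  have hM : tileCount (s₂ ::ₘ R) g ≤ 1 := by
    have : [g, g].count g = 2 := by simp
    simp only [tileCount_cons] at hg ⊢
    omega
  have hs₂ := eq_of_mem_of_tileCount_le_one hM (Multiset.mem_cons_self _ _)
    (hS.mem_of_play (by simp) l₁ hgS) (List.mem_of_mem_head? h₂) (by simp)
  have hfg : f g = g := by simpa [hs₂] using h₂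
  have h2 : s₂.count g = 2 := by simp [hs₂, hfg]
  have := count_le_tileCount (g := g) (Multiset.mem_cons_self s₂ R)
  omega

lemma IsStuck.not_mem_of_mem_cons (h₁ : s₁.head? = some g) (h₂ : s₂.head? = some g)
    (l₁ : s₁.length ≤ 2) (l₂ : s₂.length ≤ 2) (hS : IsStuck (play s₁ s₂ ([g, c] ::ₘ R)) S f)
    (hsurj : Set.SurjOn f S S) (hcg : c ≠ g) (hC : [g, c] ∈ s₂ ::ₘ R) : c ∉ S := by
  intro hcS
  obtain ⟨e, heS, hfe⟩ := hsurj hcS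
  have hE : [c, e] ∈ R := (Multiset.mem_cons.mp (hfe ▸ hS.mem_of_play l₁ l₂ heS)).resolve_left
    (by simp [hcg])
  have hc₁ : tileCount (s₂ ::ₘ R) c ≤ 1 := by
    have hc₂ := hS.tileCount_of_play h₁ h₂ hcS hcg
    have : 1 ≤ [g, c].count c := List.count_pos_iff.mpr (by simp)
    simp only [tileCount_cons] at hc₂ ⊢
    omega
  have := eq_of_mem_of_tileCount_le_one hc₁ hC (Multiset.mem_cons_of_mem hE) (by simp) (by simp)
  simp only [List.cons.injEq] at this
  exact hcg this.1.symm

lemma not_hasBlockedCycle_play_of_isStuck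
    (hnc : ¬ HasBlockedCycle (s₁ ::ₘ s₂ ::ₘ [g, c] ::ₘ R))
    (hg : tileCount (s₁ ::ₘ s₂ ::ₘ [g, c] ::ₘ R) g ≤ 4)
    (h₁ : s₁.head? = some g) (h₂ : s₂.head? = some g) (l₁ : s₁.length ≤ 2) (l₂ : s₂.length ≤ 2)
    (hS : IsStuck (play s₁ s₂ ([g, c] ::ₘ R)) S f) (hinj : Set.InjOn f S)
    (hsurj : Set.SurjOn f S S) (hgS : g ∈ S) (hcS : c ∈ S) (hfc : f c = g) :
    ¬ HasBlockedCycle (play [g, c] s₁ (s₂ ::ₘ R)) := by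
  intro hc
  obtain ⟨S₂, f₂, hne₂, hS₂, hinj₂, hsurj₂⟩ := hc.exists_isStuck
  have hgS₂ : g ∈ S₂ := hS₂.head_mem_of_play
    (by rwa [Multiset.cons_swap [g, c], Multiset.cons_swap [g, c] s₂]) rfl h₁ (by simp) l₁ hne₂
  obtain rfl | hcg := eq_or_ne c g
  · exact hS₂.not_mem_of_play_pair hg h₁ h₂ l₁ hgS₂
  have hmem {x y : G} (h : [x, y] ∈ [g, c] ::ₘ R ∨ [x, y] ∈ s₂ ::ₘ R) :
      [x, y] ∈ s₁ ::ₘ s₂ ::ₘ [g, c] ::ₘ R := by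
    simp only [Multiset.mem_cons] at h ⊢
    tauto
  have hD : [f g, g] ∈ R :=
    (Multiset.mem_cons.mp (hS.mem_of_play l₁ l₂ hgS)).resolve_left (by simp [hcg.symm])
  obtain ⟨c₂, hc₂S₂, hfc₂⟩ := hsurj₂ hgS₂
  have hC₂ : [g, c₂] ∈ s₂ ::ₘ R := hfc₂ ▸ hS₂.mem_of_play (by simp) l₁ hc₂S₂
  have hM : tileCount (s₂ ::ₘ R) g ≤ 2 := by
    have : 1 ≤ s₁.count g := List.count_pos_iff.mpr (List.mem_of_mem_head? h₁)
    have : 1 ≤ [g, c].count g := List.count_pos_iff.mpr (by simp)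
    simp only [tileCount_cons] at hg ⊢
    omega
  have hfg : f g = f₂ g := eq_of_mem_of_tileCount_le_two hM hC₂ (Multiset.mem_cons_of_mem hD)
    (hS₂.mem_of_play (by simp) l₁ hgS₂)
  have heqOn : Set.EqOn f f₂ ↑(S ∩ S₂) := fun a ha => by
    obtain ⟨haS, haS₂⟩ := Finset.mem_inter.mp ha
    obtain rfl | hag := eq_or_ne a g
    · exact hfg
    exact hS.eq_of_mem hS₂ hsurj (fun x y h => hmem (.inl (mem_of_mem_play l₁ l₂ h)))
      (fun x y h => hmem (.inr (mem_of_mem_play (by simp) l₁ h)))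
      (hS.tileCount_of_play h₁ h₂ haS hag).le haS haS₂
  -- both stuck sets climb from `[f g, g]` along the same stacks, hence end at the same `[g, c]`
  obtain rfl : c = c₂ := eq_of_eqOn_inter (fun a ha => (hS a ha).1) (fun a ha => (hS₂ a ha).1)
    hinj hinj₂ heqOn hcS hc₂S₂ (hfc.trans hfc₂.symm) (hfc ▸ Finset.mem_inter.mpr ⟨hgS, hgS₂⟩)
  exact hS.not_mem_of_mem_cons h₁ h₂ l₁ l₂ hsurj hcg hC₂ hcS

end SafeMove

lemma exists_move_not_hasBlockedCycle {B : Board G} (hB : B ≠ 0) (hH : HeightsOK B)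
    (h024 : ∀ g, tileCount B g = 0 ∨ tileCount B g = 2 ∨ tileCount B g = 4)
    (hnc : ¬ HasBlockedCycle B) : ∃ B', Move B B' ∧ ¬ HasBlockedCycle B' := by
  obtain ⟨g, s₁, s₂, rest, rfl, h₁, h₂⟩ :=
    exists_eq_cons_cons_of_not_hasBlockedCycle hB hH h024 hnc
  have l₁ : s₁.length ≤ 2 := (hH s₁ (by simp)).2
  have l₂ : s₂.length ≤ 2 := (hH s₂ (by simp)).2
  by_cases hc : HasBlockedCycle (play s₁ s₂ rest)
  swap
  · exact ⟨_, ⟨g, s₁, s₂, rest, rfl, h₁, h₂, rfl⟩, hc⟩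
  -- playing `s₁, s₂` gets `g` stuck on top of some `[g, c]`; playing `s₁` with `[g, c]` is safe
  obtain ⟨S, f, hne, hS, hinj, hsurj⟩ := hc.exists_isStuck
  have hgS := hS.head_mem_of_play hnc h₁ h₂ l₁ l₂ hne
  obtain ⟨c, hcS, hfc⟩ := hsurj hgS
  obtain ⟨R, rfl⟩ := Multiset.exists_cons_of_mem (hfc ▸ hS.mem_of_play l₁ l₂ hcS)
  refine ⟨_, ⟨g, [g, c], s₁, s₂ ::ₘ R, ?_, rfl, h₁, rfl⟩,
    not_hasBlockedCycle_play_of_isStuck hnc ?_ h₁ h₂ l₁ l₂ hS hinj hsurj hgS hcS hfc⟩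
  · rw [Multiset.cons_swap [g, c], Multiset.cons_swap [g, c] s₂]
  · have := h024 g
    omega

theorem solvable_of_not_hasBlockedCycle {B : Board G} (hH : HeightsOK B)
    (h024 : ∀ g, tileCount B g = 0 ∨ tileCount B g = 2 ∨ tileCount B g = 4)
    (hnc : ¬ HasBlockedCycle B) : Solvable B := by
  induction hn : totalTiles B using Nat.strong_induction_on generalizing B with
  | _ n ih =>
  obtain rfl | hB := eq_or_ne B 0
  · exact .refl
  obtain ⟨B', hmove, hnc'⟩ := exists_move_not_hasBlockedCycle hB hH h024 hnc
  refine .head hmove (ih _ ?_ ?_ ?_ hnc' rfl)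
  all_goals obtain ⟨g, s₁, s₂, rest, rfl, h₁, h₂, rfl⟩ := hmove
  · rw [← hn, ← totalTiles_play (hH s₁ (by simp)).1 (hH s₂ (by simp)).1]
    omega
  · exact heightsOK_play hH
  · intro a
    have := tileCount_play h₁ h₂ (rest := rest) a
    have := h024 a
    split_ifs at * <;> omega

/-- every board of isolated stacks of heights one and two in which
every present group has exactly four tiles is solvable. -/
theorem stmt9 (B : Board G) (hH : HeightsOK B)
    (h4 : ∀ g : G, tileCount B g ≠ 0 → tileCount B g = 4) :
    Solvable B := by
  refine solvable_of_not_hasBlockedCycle hH (fun g => ?_) ?_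
  · have := h4 g
    omega
  · rintro ⟨k, p, -, hcount, -⟩
    have := h4 (p 0)
    have := hcount 0
    omega
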